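/- arXiv:2211.16911 — 3 statements merged into one kernel-verified Lean document; each statement's English description precedes it below -/
import Mathlib

section
/- Let μ be a Borel measure on ℝ², M > 0, and let G ⊂ J ⊂ ℝ/ℤ where J is an interval and G is closed in J. Suppose that for every connected component I of J \ G there exists θ_I ∈ 3I with ‖π_{θ_I}^⊥ μ‖_{L^∞} ≤ M. Then for every x ∈ ℝ² and every r > 0, μ(X(x, J \ G, r)) ≤ C·M·|J \ G|·r, where C is an absolute constant and |·| denotes Lebesgue measure on ℝ/ℤ. -/
open MeasureTheory Real Set
open scoped RealInnerProductSpace ENNReal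

noncomputable section

abbrev Plane := EuclideanSpace ℝ (Fin 2)

/-- The unit vector in direction `θ ∈ ℝ/ℤ`. -/
def dir (θ : ℝ) : Plane :=
  (EuclideanSpace.equiv (Fin 2) ℝ).symm ![Real.cos (2 * Real.pi * θ), Real.sin (2 * Real.pi * θ)]

/-- Projection onto the direction perpendicular to `e_θ`. -/
def projPerp (θ : ℝ) (y : Plane) : ℝ := ⟪y, dir (θ + 1/4)⟫

/-- The truncated cone `X(x, I, r)`. -/
def tcone (x : Plane) (I : Set ℝ) (r : ℝ) : Set Plane :=
  {y | ∃ φ ∈ I, ∃ t : ℝ, y = x + t • dir φ} ∩ Metric.closedBall x r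

/-- For a bounded set `S ⊆ ℝ` (in practice an interval), the concentric triple `3S`:
the interval with the same midpoint and three times the length. -/
def tripleSet (S : Set ℝ) : Set ℝ := Set.Icc (2 * sInf S - sSup S) (2 * sSup S - sInf S)

/-!
Split `J \ G` into its connected components `I`; there are countably many, since each one
contains a rational. Inside the cone `X(x, I, r)` a point `x + t e_φ` has
`π_θ^⊥`-coordinate `π_θ^⊥ x + t sin (2π(φ - θ))`, and `|φ - θ| ≤ 2|I|` for `θ ∈ 3I`, so the
cone projects into an interval of length `8π r |I|`. The `L^∞` bound on `π_{θ_I}^⊥ μ` then gives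
`μ(X(x, I, r)) ≤ 8π M r |I|`, and summing over the disjoint components gives the claim.
-/

lemma inner_dir (φ θ : ℝ) : ⟪dir φ, dir θ⟫ = Real.cos (2 * π * φ - 2 * π * θ) := by
  simp [dir, PiLp.inner_apply, Fin.sum_univ_two, Real.cos_sub, EuclideanSpace.equiv]
  ring

lemma norm_dir (φ : ℝ) : ‖dir φ‖ = 1 := by
  have h : ⟪dir φ, dir φ⟫ = 1 := by rw [inner_dir]; simp
  rwa [real_inner_self_eq_norm_sq, pow_eq_one_iff_of_nonneg (norm_nonneg _) two_ne_zero] at h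

lemma projPerp_add_smul_dir (θ : ℝ) (x : Plane) (t φ : ℝ) :
    projPerp θ (x + t • dir φ) = projPerp θ x + t * Real.sin (2 * π * (φ - θ)) := by
  have : 2 * π * φ - 2 * π * (θ + 1/4) = 2 * π * (φ - θ) - π / 2 := by ring
  rw [projPerp, projPerp, inner_add_left, real_inner_smul_left, inner_dir, this,
    Real.cos_sub_pi_div_two]

lemma measurable_projPerp (θ : ℝ) : Measurable (projPerp θ) :=
  (continuous_id.inner continuous_const).measurable

lemma abs_sub_le_of_mem_tripleSet {I : Set ℝ} (hbb : BddBelow I) (hba : BddAbove I) {φ θ : ℝ}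
    (hφ : φ ∈ I) (hθ : θ ∈ tripleSet I) : |φ - θ| ≤ 2 * (sSup I - sInf I) := by
  have := csInf_le hbb hφ
  have := le_csSup hba hφ
  obtain ⟨h₁, h₂⟩ := hθ
  rw [abs_le]
  constructor <;> linarith

lemma tcone_subset_preimage_projPerp {I : Set ℝ} (hbb : BddBelow I) (hba : BddAbove I) {θ : ℝ}
    (hθ : θ ∈ tripleSet I) (x : Plane) {r : ℝ} (hr : 0 ≤ r) :
    tcone x I r ⊆
      projPerp θ ⁻¹' Metric.closedBall (projPerp θ x) (4 * π * r * (sSup I - sInf I)) := by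
  rintro _ ⟨⟨φ, hφ, t, rfl⟩, hball⟩
  have ht : |t| ≤ r := by
    simpa [dist_eq_norm, norm_smul, norm_dir] using Metric.mem_closedBall.1 hball
  have hsin : |Real.sin (2 * π * (φ - θ))| ≤ 2 * π * (2 * (sSup I - sInf I)) :=
    calc |Real.sin (2 * π * (φ - θ))| ≤ |2 * π * (φ - θ)| := Real.abs_sin_le_abs
      _ = 2 * π * |φ - θ| := by rw [abs_mul, abs_of_pos two_pi_pos]
      _ ≤ 2 * π * (2 * (sSup I - sInf I)) :=
        mul_le_mul_of_nonneg_left (abs_sub_le_of_mem_tripleSet hbb hba hφ hθ) two_pi_pos.le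
  rw [mem_preimage, Metric.mem_closedBall, projPerp_add_smul_dir, Real.dist_eq, add_sub_cancel_left,
    abs_mul]
  calc |t| * |Real.sin (2 * π * (φ - θ))| ≤ r * (2 * π * (2 * (sSup I - sInf I))) :=
        mul_le_mul ht hsin (abs_nonneg _) hr
    _ = 4 * π * r * (sSup I - sInf I) := by ring

lemma ofReal_sSup_sub_sInf_le_volume {I : Set ℝ} (hI : IsConnected I) (hbb : BddBelow I)
    (hba : BddAbove I) : ENNReal.ofReal (sSup I - sInf I) ≤ volume I := by
  rw [← Real.volume_Ioo]
  exact measure_mono (hI.Ioo_csInf_csSup_subset hbb hba)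

lemma measure_tcone_le_of_map_le (μ : Measure Plane) {M : ℝ} (hM : 0 ≤ M) {I : Set ℝ}
    (hI : IsConnected I) (hbb : BddBelow I) (hba : BddAbove I) {θ : ℝ} (hθ : θ ∈ tripleSet I)
    (hmap : ∀ A : Set ℝ, MeasurableSet A → μ.map (projPerp θ) A ≤ ENNReal.ofReal M * volume A)
    (x : Plane) {r : ℝ} (hr : 0 ≤ r) :
    μ (tcone x I r) ≤ ENNReal.ofReal (32 * M * r) * volume I := by
  set L := sSup I - sInf I
  have hL : 0 ≤ L := sub_nonneg.2 (csInf_le_csSup hI.nonempty hbb hba)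
  calc μ (tcone x I r)
      ≤ μ (projPerp θ ⁻¹' Metric.closedBall (projPerp θ x) (4 * π * r * L)) :=
        measure_mono (tcone_subset_preimage_projPerp hbb hba hθ x hr)
    _ = μ.map (projPerp θ) (Metric.closedBall (projPerp θ x) (4 * π * r * L)) :=
        (Measure.map_apply (measurable_projPerp θ) Metric.isClosed_closedBall.measurableSet).symm
    _ ≤ ENNReal.ofReal M * ENNReal.ofReal (2 * (4 * π * r * L)) := by
        rw [← Real.volume_closedBall]
        exact hmap _ Metric.isClosed_closedBall.measurableSet
    _ ≤ ENNReal.ofReal (32 * M * r) * ENNReal.ofReal L := by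
        rw [← ENNReal.ofReal_mul hM, ← ENNReal.ofReal_mul (by positivity)]
        gcongr ENNReal.ofReal ?_
        nlinarith [mul_le_mul_of_nonneg_right Real.pi_le_four (by positivity : 0 ≤ M * r * L)]
    _ ≤ ENNReal.ofReal (32 * M * r) * volume I := by
        gcongr
        exact ofReal_sSup_sub_sInf_le_volume hI hbb hba

lemma tcone_sUnion (x : Plane) (S : Set (Set ℝ)) (r : ℝ) :
    tcone x (⋃₀ S) r = ⋃ I ∈ S, tcone x I r := by
  ext y
  simp only [tcone, mem_inter_iff, mem_ofPred_eq, mem_sUnion, mem_iUnion, exists_prop]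
  constructor
  · rintro ⟨⟨φ, ⟨I, hI, hφ⟩, h⟩, hy⟩
    exact ⟨I, hI, ⟨φ, hφ, h⟩, hy⟩
  · rintro ⟨I, hI, ⟨φ, hφ, h⟩, hy⟩
    exact ⟨⟨φ, ⟨I, hI, hφ⟩, h⟩, hy⟩

section Components

variable {α : Type*} [TopologicalSpace α]

lemma sUnion_image_connectedComponentIn (F : Set α) :
    ⋃₀ (connectedComponentIn F '' F) = F := by
  apply subset_antisymm
  · rintro _ ⟨_, ⟨y, -, rfl⟩, hz⟩
    exact connectedComponentIn_subset F y hz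
  · exact fun y hy ↦ ⟨_, mem_image_of_mem _ hy, mem_connectedComponentIn hy⟩

lemma pairwise_disjoint_image_connectedComponentIn (F : Set α) :
    (connectedComponentIn F '' F).Pairwise Disjoint := by
  rintro _ ⟨y, -, rfl⟩ _ ⟨y', -, rfl⟩ hne
  refine disjoint_left.2 fun z hz hz' ↦ hne ?_
  rw [connectedComponentIn_eq hz, connectedComponentIn_eq hz']

end Components

lemma exists_rat_mem_connectedComponentIn_Icc_diff {a b : ℝ} (hab : a < b) {G : Set ℝ}
    (hG : IsClosed G) {φ : ℝ} (hφ : φ ∈ Icc a b \ G) :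
    ∃ q : ℚ, (q : ℝ) ∈ connectedComponentIn (Icc a b \ G) φ := by
  obtain ⟨ε, hε, hball⟩ := Metric.isOpen_iff.1 hG.isOpen_compl φ hφ.2
  obtain ⟨⟨haφ, hφb⟩, -⟩ := hφ
  set K := Icc (max a (φ - ε / 2)) (min b (φ + ε / 2))
  have hK : K ⊆ Icc a b \ G := by
    refine fun z hz ↦ ⟨⟨le_of_max_le_left hz.1, le_of_le_min_left hz.2⟩, hball ?_⟩
    rw [Metric.mem_ball, Real.dist_eq, abs_lt]
    have := le_of_max_le_right hz.1
    have := le_of_le_min_right hz.2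
    constructor <;> linarith
  have hφK : φ ∈ K := ⟨max_le haφ (by linarith), le_min hφb (by linarith)⟩
  have hne : max a (φ - ε / 2) < min b (φ + ε / 2) :=
    max_lt (lt_min hab (by linarith)) (lt_min (by linarith) (by linarith))
  obtain ⟨q, hq₁, hq₂⟩ := exists_rat_btwn hne
  exact ⟨q, isPreconnected_Icc.subset_connectedComponentIn hφK hK ⟨hq₁.le, hq₂.le⟩⟩

lemma countable_image_connectedComponentIn_Icc_diff {a b : ℝ} (hab : a ≤ b) {G : Set ℝ}
    (hG : IsClosed G) :
    (connectedComponentIn (Icc a b \ G) '' (Icc a b \ G)).Countable := by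
  rcases hab.eq_or_lt with rfl | hlt
  · exact ((subsingleton_Icc_of_ge le_rfl).anti sdiff_subset).image _ |>.countable
  · refine (countable_range fun q : ℚ ↦ connectedComponentIn (Icc a b \ G) q).mono ?_
    rintro _ ⟨φ, hφ, rfl⟩
    obtain ⟨q, hq⟩ := exists_rat_mem_connectedComponentIn_Icc_diff hlt hG hφ
    exact ⟨q, (connectedComponentIn_eq hq).symm⟩

lemma measure_biUnion_le_mul_measure_sUnion {β γ : Type*} [MeasurableSpace β]
    [MeasurableSpace γ] (μ : Measure β) (ν : Measure γ) {S : Set (Set γ)} (hS : S.Countable)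
    (hd : S.Pairwise Disjoint) (hm : ∀ I ∈ S, MeasurableSet I) (f : Set γ → Set β) (c : ℝ≥0∞)
    (h : ∀ I ∈ S, μ (f I) ≤ c * ν I) :
    μ (⋃ I ∈ S, f I) ≤ c * ν (⋃₀ S) :=
  calc μ (⋃ I ∈ S, f I) ≤ ∑' I : S, μ (f I) := measure_biUnion_le μ hS f
    _ ≤ ∑' I : S, c * ν I := ENNReal.tsum_le_tsum fun I ↦ h I I.2
    _ = c * ν (⋃₀ S) := by rw [ENNReal.tsum_mul_left, measure_sUnion hS hd hm]

/-- If `G` is closed in the interval `J` and for every connected component `I` of `J \ G`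
there is `θ_I ∈ 3I` with `‖π_{θ_I}^⊥ μ‖_∞ ≤ M`, then
`μ(X(x, J \ G, r)) ≤ C·M·|J \ G|·r` for an absolute constant `C`. -/
theorem stmt5 :
    ∃ C : ℝ, 0 < C ∧
      ∀ (μ : Measure Plane) (M a b : ℝ) (G : Set ℝ),
        0 ≤ M → a ≤ b → G ⊆ Set.Icc a b → IsClosed G →
        (∀ φ ∈ Set.Icc a b \ G,
          ∃ θI ∈ tripleSet (connectedComponentIn (Set.Icc a b \ G) φ),
            ∀ A : Set ℝ, MeasurableSet A →
              μ.map (projPerp θI) A ≤ ENNReal.ofReal M * volume A) →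
        ∀ (x : Plane) (r : ℝ), 0 < r →
          μ (tcone x (Set.Icc a b \ G) r) ≤
            ENNReal.ofReal (C * M * r) * volume (Set.Icc a b \ G) := by
  refine ⟨32, by norm_num, fun μ M a b G hM hab _ hG hθ x r hr ↦ ?_⟩
  set U := Icc a b \ G
  have hbdd : ∀ φ, connectedComponentIn U φ ⊆ Icc a b :=
    fun φ ↦ (connectedComponentIn_subset U φ).trans sdiff_subset
  calc μ (tcone x U r) = μ (⋃ I ∈ connectedComponentIn U '' U, tcone x I r) := by
        rw [← tcone_sUnion, sUnion_image_connectedComponentIn]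
    _ ≤ ENNReal.ofReal (32 * M * r) * volume (⋃₀ (connectedComponentIn U '' U)) := by
        refine measure_biUnion_le_mul_measure_sUnion μ volume
          (countable_image_connectedComponentIn_Icc_diff hab hG)
          (pairwise_disjoint_image_connectedComponentIn U)
          (fun _ ⟨_, _, hI⟩ ↦ hI ▸ isPreconnected_connectedComponentIn.ordConnected.measurableSet)
          _ _ ?_
        rintro _ ⟨φ, hφ, rfl⟩
        obtain ⟨θ, hθI, hmap⟩ := hθ φ hφ
        exact measure_tcone_le_of_map_le μ hM (isConnected_connectedComponentIn_iff.2 hφ)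
          (bddBelow_Icc.mono (hbdd φ)) (bddAbove_Icc.mono (hbdd φ)) hθI hmap x hr.le
    _ = ENNReal.ofReal (32 * M * r) * volume U := by rw [sUnion_image_connectedComponentIn]
end
end

section
/- Stopping time packing estimate: let D be a countable family of 'cubes' organized in a tree (each Q ∈ D has a well-defined set of maximal strict descendants), let μ(Q) ≥ 0, and E(Q) ≥ 0 be weights. For R ∈ D, let BCE(R) be the maximal cubes Q ≤ R with Σ_{Q ⊆ S ⊆ R} E(S) ≥ δλ, and let Tree(R) be the cubes ≤ R not strictly below any cube of BCE(R). If the cubes in BCE(R) are pairwise disjoint subsets of R (as sets, with μ additive on disjoint unions), then δλ · Σ_{P ∈ BCE(R)} μ(P) ≤ Σ_{Q ∈ Tree(R)} E(Q) μ(Q). -/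
open MeasureTheory Set
open scoped ENNReal

noncomputable section

variable {α ι : Type*}

/-- The sum `Σ_{S : Q ⊆ S ⊆ R} E(S)` of the weights over the cubes between `Q` and `R`. -/
def sumE (cube : ι → Set α) (Ew : ι → ℝ≥0∞) (Q R : ι) : ℝ≥0∞ :=
  ∑' S : {S : ι // cube Q ⊆ cube S ∧ cube S ⊆ cube R}, Ew S

/-- `BCE(R)`: the maximal cubes `Q ⊆ R` with `Σ_{Q ⊆ S ⊆ R} E(S) ≥ δλ`. -/
def BCE (cube : ι → Set α) (Ew : ι → ℝ≥0∞) (dl : ℝ≥0∞) (R : ι) : Set ι :=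
  {Q | cube Q ⊆ cube R ∧ dl ≤ sumE cube Ew Q R ∧
    ∀ Q', cube Q ⊆ cube Q' → cube Q' ⊆ cube R → dl ≤ sumE cube Ew Q' R →
      cube Q' = cube Q}

/-- `Tree(R)`: the cubes `⊆ R` not strictly below any cube of `BCE(R)`. -/
def TreeOf (cube : ι → Set α) (Ew : ι → ℝ≥0∞) (dl : ℝ≥0∞) (R : ι) : Set ι :=
  {Q | cube Q ⊆ cube R ∧ ∀ P ∈ BCE cube Ew dl R, ¬cube Q ⊂ cube P}

/-! For `P ∈ BCE(R)` the stopping condition gives `δλ μ(P) ≤ Σ_{P ⊆ S ⊆ R} E(S) μ(P)`.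
Summing over `P` and exchanging the sums, each `S` receives
`E(S) Σ_{P ∈ BCE(R), P ⊆ S} μ(P) ≤ E(S) μ(S)` by disjointness of the stopping cubes. Only cubes
`S` containing a nonempty stopping cube contribute, and such an `S` cannot lie strictly inside
a stopping cube, which would meet the first one; so `S ∈ Tree(R)`. -/

section Packing

variable {cube : ι → Set α} {Ew : ι → ℝ≥0∞} {dl : ℝ≥0∞} {R : ι}

theorem mem_treeOf_of_bce_subset (hB : (BCE cube Ew dl R).PairwiseDisjoint cube) {P S : ι}
    (hP : P ∈ BCE cube Ew dl R) (hne : (cube P).Nonempty) (hPS : cube P ⊆ cube S)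
    (hSR : cube S ⊆ cube R) : S ∈ TreeOf cube Ew dl R := by
  refine ⟨hSR, fun P' hP' hSP' => ?_⟩
  rcases eq_or_ne P P' with rfl | hPP'
  · exact hSP'.not_subset hPS
  · obtain ⟨x, hx⟩ := hne
    exact disjoint_left.mp (hB hP hP' hPP') hx (hSP'.subset (hPS hx))

variable [MeasurableSpace α]

def stoppingWeight (cube : ι → Set α) (Ew : ι → ℝ≥0∞) (dl : ℝ≥0∞) (R : ι) (μ : Measure α)
    (P S : ι) : ℝ≥0∞ :=
  {S | cube P ⊆ cube S ∧ cube S ⊆ cube R}.indicator Ew S *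
    (BCE cube Ew dl R).indicator (fun P => μ (cube P)) P

theorem mul_measure_le_tsum_stoppingWeight (μ : Measure α) (P : ι) :
    dl * (BCE cube Ew dl R).indicator (fun P => μ (cube P)) P ≤
      ∑' S, stoppingWeight cube Ew dl R μ P S := by
  simp only [stoppingWeight]
  rw [ENNReal.tsum_mul_right, ← tsum_subtype]
  by_cases hP : P ∈ BCE cube Ew dl R
  · simp only [indicator_of_mem hP]
    exact mul_le_mul_left hP.2.1 _
  · simp [indicator_of_notMem hP]

theorem tsum_stoppingWeight_le_indicator_treeOf [Countable ι] (μ : Measure α)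
    (hB : (BCE cube Ew dl R).PairwiseDisjoint cube) (hmeas : ∀ i, MeasurableSet (cube i))
    (S : ι) :
    ∑' P, stoppingWeight cube Ew dl R μ P S ≤
      (TreeOf cube Ew dl R).indicator (fun S => Ew S * μ (cube S)) S := by
  by_cases hS : S ∈ TreeOf cube Ew dl R
  · set A := {P | P ∈ BCE cube Ew dl R ∧ cube P ⊆ cube S}
    have hA : A.PairwiseDisjoint cube := hB.subset fun _ hP => hP.1
    calc ∑' P, stoppingWeight cube Ew dl R μ P S
        ≤ ∑' P, Ew S * A.indicator (fun P => μ (cube P)) P := by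
          refine ENNReal.tsum_le_tsum fun P => ?_
          simp only [stoppingWeight, indicator, A, mem_ofPred_eq]
          split_ifs <;> simp_all
      _ = Ew S * μ (⋃ P ∈ A, cube P) := by
          rw [ENNReal.tsum_mul_left, ← tsum_subtype,
            measure_biUnion A.to_countable hA fun P _ => hmeas P]
      _ ≤ Ew S * μ (cube S) := by gcongr; exact iUnion₂_subset fun P hP => hP.2
      _ = _ := (indicator_of_mem hS (fun S => Ew S * μ (cube S))).symm
  · rw [indicator_of_notMem hS]
    refine le_of_eq (ENNReal.tsum_eq_zero.mpr fun P => ?_)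
    simp only [stoppingWeight, indicator, mem_ofPred_eq]
    split_ifs with hPS hP
    · rw [not_nonempty_iff_eq_empty.mp fun hne =>
        hS (mem_treeOf_of_bce_subset hB hP hne hPS.1 hPS.2), measure_empty, mul_zero]
    all_goals simp

end Packing

theorem stmt14_general [Countable ι] [MeasurableSpace α] (cube : ι → Set α) (μ : Measure α)
    (Ew : ι → ℝ≥0∞) (δ lam : ℝ≥0∞) (R : ι)
    (hmeas : ∀ i, MeasurableSet (cube i))
    (hdisjBCE : ∀ P ∈ BCE cube Ew (δ * lam) R, ∀ P' ∈ BCE cube Ew (δ * lam) R,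
      P ≠ P' → Disjoint (cube P) (cube P')) :
    δ * lam * ∑' P : BCE cube Ew (δ * lam) R, μ (cube P) ≤
      ∑' Q : TreeOf cube Ew (δ * lam) R, Ew Q * μ (cube Q) :=
  calc δ * lam * ∑' P : BCE cube Ew (δ * lam) R, μ (cube P)
      = ∑' P, δ * lam * (BCE cube Ew (δ * lam) R).indicator (fun P => μ (cube P)) P := by
        rw [ENNReal.tsum_mul_left, ← tsum_subtype]
    _ ≤ ∑' P, ∑' S, stoppingWeight cube Ew (δ * lam) R μ P S :=
        ENNReal.tsum_le_tsum fun P => mul_measure_le_tsum_stoppingWeight μ P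
    _ = ∑' S, ∑' P, stoppingWeight cube Ew (δ * lam) R μ P S := ENNReal.tsum_comm
    _ ≤ ∑' S, (TreeOf cube Ew (δ * lam) R).indicator (fun S => Ew S * μ (cube S)) S :=
        ENNReal.tsum_le_tsum
          (tsum_stoppingWeight_le_indicator_treeOf μ hdisjBCE hmeas)
    _ = _ := (tsum_subtype _ _).symm

/-- Stopping-time packing estimate: if the cubes of `BCE(R)` are pairwise disjoint
subsets of `R`, then `δλ · Σ_{P ∈ BCE(R)} μ(P) ≤ Σ_{Q ∈ Tree(R)} E(Q) μ(Q)`. -/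
theorem stmt14 [Countable ι] [MeasurableSpace α] (cube : ι → Set α) (μ : Measure α)
    (Ew : ι → ℝ≥0∞) (δ lam : ℝ≥0∞) (R : ι)
    (hinj : Function.Injective cube)
    (hmeas : ∀ i, MeasurableSet (cube i))
    (hnest : ∀ i j : ι, (cube i ∩ cube j).Nonempty → cube i ⊆ cube j ∨ cube j ⊆ cube i)
    (hdisjBCE : ∀ P ∈ BCE cube Ew (δ * lam) R, ∀ P' ∈ BCE cube Ew (δ * lam) R,
      P ≠ P' → Disjoint (cube P) (cube P')) :
    δ * lam * ∑' P : BCE cube Ew (δ * lam) R, μ (cube P) ≤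
      ∑' Q : TreeOf cube Ew (δ * lam) R, Ew Q * μ (cube Q) :=
  stmt14_general cube μ Ew δ lam R hmeas hdisjBCE
end
end

section
/- With the same stopping-time setup: for every R, Σ_{Q ∈ Tree(R)\BCE(R)} E(Q)μ(Q) ≤ δλ·μ(R). More precisely, since every Q ∈ Tree(R)\BCE(R) satisfies Σ_{Q ⊆ S ⊆ R} E(S) < δλ, and the function x ↦ Σ_{Q ∈ Tree(R)\BCE(R)} E(Q)1_Q(x) is pointwise bounded by δλ on R, integrating over R with respect to μ gives the bound. -/
open MeasureTheory Set
open scoped ENNReal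

noncomputable section

variable {α ι : Type*}

/-! Cubes containing a common point form a chain, so among finitely many of them there is a
smallest one, `Q₀`, and all of them lie between `Q₀` and `R`. Hence the function
`x ↦ Σ_{Q ∈ Tree(R) \ BCE(R)} E(Q) 1_Q(x)` is bounded by `δλ` on `R`, and vanishes off `R`;
integrating it gives the bound. -/

section StoppingTree

variable {cube : ι → Set α} {Ew : ι → ℝ≥0∞}

theorem exists_cube_subset_forall_of_mem
    (hnest : ∀ i j : ι, (cube i ∩ cube j).Nonempty → cube i ⊆ cube j ∨ cube j ⊆ cube i)
    {x : α} {s : Finset ι} (hs : s.Nonempty) (hx : ∀ Q ∈ s, x ∈ cube Q) :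
    ∃ Q₀ ∈ s, ∀ Q ∈ s, cube Q₀ ⊆ cube Q := by
  obtain ⟨Q₀, hQ₀, hmin⟩ := s.exists_minimalFor cube hs
  refine ⟨Q₀, hQ₀, fun Q hQ => ?_⟩
  rcases hnest Q₀ Q ⟨x, hx Q₀ hQ₀, hx Q hQ⟩ with h | h
  · exact h
  · exact hmin hQ h

theorem sum_le_sumE {Q₀ R : ι} {s : Finset ι}
    (hs : ∀ Q ∈ s, cube Q₀ ⊆ cube Q ∧ cube Q ⊆ cube R) :
    ∑ Q ∈ s, Ew Q ≤ sumE cube Ew Q₀ R := by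
  classical
  rw [← s.sum_subtype_of_mem Ew hs]
  exact ENNReal.sum_le_tsum _

theorem sum_le_of_forall_mem_cube
    (hnest : ∀ i j : ι, (cube i ∩ cube j).Nonempty → cube i ⊆ cube j ∨ cube j ⊆ cube i)
    {x : α} {R : ι} {c : ℝ≥0∞} {s : Finset ι}
    (hs : ∀ Q ∈ s, x ∈ cube Q ∧ cube Q ⊆ cube R ∧ sumE cube Ew Q R ≤ c) :
    ∑ Q ∈ s, Ew Q ≤ c := by
  rcases s.eq_empty_or_nonempty with rfl | hne
  · simp
  obtain ⟨Q₀, hQ₀, hmin⟩ := exists_cube_subset_forall_of_mem hnest hne fun Q hQ => (hs Q hQ).1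
  calc ∑ Q ∈ s, Ew Q ≤ sumE cube Ew Q₀ R := sum_le_sumE fun Q hQ => ⟨hmin Q hQ, (hs Q hQ).2.1⟩
    _ ≤ c := (hs Q₀ hQ₀).2.2

theorem tsum_indicator_le_indicator
    (hnest : ∀ i j : ι, (cube i ∩ cube j).Nonempty → cube i ⊆ cube j ∨ cube j ⊆ cube i)
    {R : ι} {c : ℝ≥0∞} {p : ι → Prop} (hp : ∀ Q, p Q → cube Q ⊆ cube R ∧ sumE cube Ew Q R ≤ c)
    (x : α) :
    ∑' Q : {Q // p Q}, (cube Q).indicator (fun _ => Ew Q) x ≤ (cube R).indicator (fun _ => c) x := by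
  classical
  by_cases hxR : x ∈ cube R
  · rw [indicator_of_mem hxR]
    refine ENNReal.summable.tsum_le_of_sum_le fun s => ?_
    calc ∑ Q ∈ s, (cube Q).indicator (fun _ => Ew Q) x
        = ∑ Q ∈ (s.filter fun Q : {Q // p Q} => x ∈ cube Q).map (Function.Embedding.subtype p), Ew Q := by
          simp only [Finset.sum_map, Finset.sum_filter, indicator_apply]
          rfl
      _ ≤ c := sum_le_of_forall_mem_cube hnest fun Q hQ => by
          obtain ⟨Q, hQs, rfl⟩ := Finset.mem_map.mp hQ
          exact ⟨(Finset.mem_filter.mp hQs).2, hp Q Q.2⟩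
  · rw [indicator_of_notMem hxR, nonpos_iff_eq_zero, ENNReal.tsum_eq_zero]
    exact fun Q => indicator_of_notMem (fun hx => hxR ((hp Q Q.2).1 hx)) _

theorem tsum_mul_measure_le [Countable ι] [MeasurableSpace α] (μ : Measure α)
    (hnest : ∀ i j : ι, (cube i ∩ cube j).Nonempty → cube i ⊆ cube j ∨ cube j ⊆ cube i)
    {R : ι} {c : ℝ≥0∞} {p : ι → Prop} (hmeas : ∀ Q, p Q → MeasurableSet (cube Q))
    (hp : ∀ Q, p Q → cube Q ⊆ cube R ∧ sumE cube Ew Q R ≤ c) :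
    ∑' Q : {Q // p Q}, Ew Q * μ (cube Q) ≤ c * μ (cube R) :=
  calc ∑' Q : {Q // p Q}, Ew Q * μ (cube Q)
      = ∑' Q : {Q // p Q}, ∫⁻ x, (cube Q).indicator (fun _ => Ew Q) x ∂μ :=
        tsum_congr fun Q => (lintegral_indicator_const (hmeas _ Q.2) _).symm
    _ = ∫⁻ x, ∑' Q : {Q // p Q}, (cube Q).indicator (fun _ => Ew Q) x ∂μ :=
        (lintegral_tsum fun Q => (measurable_const.indicator (hmeas _ Q.2)).aemeasurable).symm
    _ ≤ ∫⁻ x, (cube R).indicator (fun _ => c) x ∂μ :=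
        lintegral_mono (tsum_indicator_le_indicator hnest hp)
    _ ≤ c * μ (cube R) := lintegral_indicator_const_le _ _

end StoppingTree

theorem stmt15_general [Countable ι] [MeasurableSpace α] (cube : ι → Set α) (μ : Measure α)
    (Ew : ι → ℝ≥0∞) (δ lam : ℝ≥0∞) (R : ι)
    (hmeas : ∀ i, MeasurableSet (cube i))
    (hnest : ∀ i j : ι, (cube i ∩ cube j).Nonempty → cube i ⊆ cube j ∨ cube j ⊆ cube i)
    (hstop : ∀ Q ∈ TreeOf cube Ew (δ * lam) R, Q ∉ BCE cube Ew (δ * lam) R →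
      sumE cube Ew Q R < δ * lam) :
    (∑' Q : {Q : ι // Q ∈ TreeOf cube Ew (δ * lam) R ∧ Q ∉ BCE cube Ew (δ * lam) R},
        Ew Q * μ (cube Q)) ≤ δ * lam * μ (cube R) :=
  tsum_mul_measure_le μ hnest (fun Q _ => hmeas Q) fun Q hQ =>
    ⟨hQ.1.1, (hstop Q hQ.1 hQ.2).le⟩

/-- Inside each tree the energies are small: since every `Q ∈ Tree(R) \ BCE(R)` satisfies
`Σ_{Q ⊆ S ⊆ R} E(S) < δλ`, we have
`Σ_{Q ∈ Tree(R)\BCE(R)} E(Q) μ(Q) ≤ δλ · μ(R)`. -/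
theorem stmt15 [Countable ι] [MeasurableSpace α] (cube : ι → Set α) (μ : Measure α)
    (Ew : ι → ℝ≥0∞) (δ lam : ℝ≥0∞) (R : ι)
    (hinj : Function.Injective cube)
    (hmeas : ∀ i, MeasurableSet (cube i))
    (hnest : ∀ i j : ι, (cube i ∩ cube j).Nonempty → cube i ⊆ cube j ∨ cube j ⊆ cube i)
    (hstop : ∀ Q ∈ TreeOf cube Ew (δ * lam) R, Q ∉ BCE cube Ew (δ * lam) R →
      sumE cube Ew Q R < δ * lam) :
    (∑' Q : {Q : ι // Q ∈ TreeOf cube Ew (δ * lam) R ∧ Q ∉ BCE cube Ew (δ * lam) R},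
        Ew Q * μ (cube Q)) ≤ δ * lam * μ (cube R) :=
  stmt15_general cube μ Ew δ lam R hmeas hnest hstop
end
end
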